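/- Let M′ be an anti-invariant submanifold, normal to ξ, of a conformal Sasakian manifold M^{2n+1}, and suppose the normal curvature tensor R^⊥ is recurrent, i.e. R^⊥(X,Y)N = θ(X,Y)N for a 2-form θ on M′ and all tangent X, Y and normal N. Then θ = 0, and hence M′ has flat normal connection (R^⊥ = 0). -/
import Mathlib


noncomputable section

/-- Abstract calculus of vector fields: a module `V` over the ring of functions
`M → ℝ`, equipped with a directional derivative `act X f` ("X(f)") and a Lie
bracket, satisfying the usual derivation/Leibniz rules. -/
structure VCalc (M : Type*) (V : Type*) [AddCommGroup V] [Module (M → ℝ) V] where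
  act : V → (M → ℝ) → (M → ℝ)
  bracket : V → V → V
  act_add : ∀ X Y φ, act (X + Y) φ = act X φ + act Y φ
  act_smul : ∀ (c : M → ℝ) X φ, act (c • X) φ = c * act X φ
  act_addf : ∀ X φ ψ, act X (φ + ψ) = act X φ + act X ψ
  act_mulf : ∀ X φ ψ, act X (φ * ψ) = act X φ * ψ + φ * act X ψ
  act_const : ∀ X (r : ℝ), act X (fun _ => r) = 0
  bracket_antisymm : ∀ X Y, bracket X Y = - bracket Y X
  bracket_leibniz : ∀ X Y (c : M → ℝ), bracket X (c • Y) = c • bracket X Y + act X c • Y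

variable {M : Type*} {V : Type*} [AddCommGroup V] [Module (M → ℝ) V]

/-- A (pseudo-)Riemannian metric as a symmetric function-bilinear form. -/
structure IsMetric (g : V → V → (M → ℝ)) : Prop where
  symm : ∀ X Y, g X Y = g Y X
  add_left : ∀ X Y Z, g (X + Y) Z = g X Z + g Y Z
  smul_left : ∀ (c : M → ℝ) X Y, g (c • X) Y = c * g X Y

/-- `nabla` is the Levi-Civita connection of the metric `g`. -/
structure IsLeviCivita (C : VCalc M V) (g : V → V → (M → ℝ)) (nabla : V → V → V) : Prop where
  metric : IsMetric g
  add_left : ∀ X Y Z, nabla (X + Y) Z = nabla X Z + nabla Y Z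
  smul_left : ∀ (c : M → ℝ) X Y, nabla (c • X) Y = c • nabla X Y
  add_right : ∀ X Y Z, nabla X (Y + Z) = nabla X Y + nabla X Z
  leibniz : ∀ X (c : M → ℝ) Y, nabla X (c • Y) = c • nabla X Y + C.act X c • Y
  compat : ∀ X Y Z, C.act X (g Y Z) = g (nabla X Y) Z + g Y (nabla X Z)
  torsion_free : ∀ X Y, nabla X Y - nabla Y X = C.bracket X Y

/-- The (1,3) Riemann curvature tensor of a connection. -/
def curv (C : VCalc M V) (nabla : V → V → V) (X Y Z : V) : V :=
  nabla X (nabla Y Z) - nabla Y (nabla X Z) - nabla (C.bracket X Y) Z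

def expf (f : M → ℝ) : M → ℝ := fun p => Real.exp (f p)
def expfHalf (f : M → ℝ) : M → ℝ := fun p => Real.exp (f p / 2)
def expNegHalf (f : M → ℝ) : M → ℝ := fun p => Real.exp (-(f p) / 2)
def expNeg (f : M → ℝ) : M → ℝ := fun p => Real.exp (-(f p))

/-- The conformally rescaled metric `g̃ = exp f • g`. -/
def confMetric (f : M → ℝ) (g : V → V → (M → ℝ)) : V → V → (M → ℝ) :=
  fun X Y => expf f * g X Y

/-- Almost contact metric structure `(φ, ξ, η, g)`. -/
structure IsACM (g : V → V → (M → ℝ)) (phi : V → V) (xi : V) (eta : V → (M → ℝ)) : Prop where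
  phi_phi : ∀ X, phi (phi X) = -X + eta X • xi
  eta_xi : eta xi = 1
  phi_xi : phi xi = 0
  eta_phi : ∀ X, eta (phi X) = 0
  compat : ∀ X Y, g (phi X) (phi Y) = g X Y - eta X * eta Y

/-- Sasakian structure: almost contact metric with
`(∇_X φ)Y = g(X,Y)ξ − η(Y)X` for the Levi-Civita connection `nabla` of `g`. -/
structure IsSasakian (C : VCalc M V) (g : V → V → (M → ℝ)) (phi : V → V) (xi : V)
    (eta : V → (M → ℝ)) (nabla : V → V → V) : Prop where
  acm : IsACM g phi xi eta
  lc : IsLeviCivita C g nabla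
  sas : ∀ X Y, nabla X (phi Y) - phi (nabla X Y) = g X Y • xi - eta Y • X

/-- Conformal Sasakian: the rescaled structure
`(φ, exp(f)^{1/2}η, exp(−f)^{1/2}ξ, exp(f) g)` is Sasakian. -/
def IsConformalSasakian (C : VCalc M V) (g : V → V → (M → ℝ)) (phi : V → V) (xi : V)
    (eta : V → (M → ℝ)) (f : M → ℝ) : Prop :=
  IsACM g phi xi eta ∧
  ∃ tnabla : V → V → V,
    IsSasakian C (confMetric f g) phi (expNegHalf f • xi)
      (fun X => expfHalf f * eta X) tnabla

/-- `ws` is the gradient of `f` with respect to `g`. -/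
def IsGradient (C : VCalc M V) (g : V → V → (M → ℝ)) (f : M → ℝ) (ws : V) : Prop :=
  ∀ X, g ws X = C.act X f

/-- A submanifold, encoded by the `g`-orthogonal projection `pr` onto its tangent
bundle; tangency of `X` is `pr X = X`, normality is `pr X = 0`. -/
structure IsTangentProj (C : VCalc M V) (g : V → V → (M → ℝ)) (pr : V → V) : Prop where
  idem : ∀ X, pr (pr X) = pr X
  add : ∀ X Y, pr (X + Y) = pr X + pr Y
  smul : ∀ (c : M → ℝ) X, pr (c • X) = c • pr X
  selfadj : ∀ X Y, g (pr X) Y = g X (pr Y)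
  bracket_stable : ∀ X Y, pr X = X → pr Y = Y → pr (C.bracket X Y) = C.bracket X Y

/-- Second fundamental form `h(X,Y)` (normal part of `∇_X Y`, Gauss formula). -/
def sff (pr : V → V) (nabla : V → V → V) (X Y : V) : V :=
  nabla X Y - pr (nabla X Y)

/-- Induced (tangential) connection `∇′_X Y` on the submanifold. -/
def indConn (pr : V → V) (nabla : V → V → V) (X Y : V) : V :=
  pr (nabla X Y)

/-- Shape operator `A_N X` (Weingarten formula). -/
def shapeOp (pr : V → V) (nabla : V → V → V) (N X : V) : V :=
  - pr (nabla X N)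

/-- Normal connection `∇^⊥_X N`. -/
def normConn (pr : V → V) (nabla : V → V → V) (X N : V) : V :=
  nabla X N - pr (nabla X N)

/-- Normal curvature tensor `R^⊥`. -/
def normCurv (C : VCalc M V) (pr : V → V) (nabla : V → V → V) (X Y N : V) : V :=
  normConn pr nabla X (normConn pr nabla Y N)
    - normConn pr nabla Y (normConn pr nabla X N)
    - normConn pr nabla (C.bracket X Y) N

/-- Curvature tensor `R′` of the induced connection on the submanifold. -/
def indCurv (C : VCalc M V) (pr : V → V) (nabla : V → V → V) (X Y Z : V) : V :=
  indConn pr nabla X (indConn pr nabla Y Z)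
    - indConn pr nabla Y (indConn pr nabla X Z)
    - indConn pr nabla (C.bracket X Y) Z

/-- an anti-invariant submanifold normal to `ξ` of a conformal
Sasakian manifold with recurrent normal curvature has `θ = 0`, hence flat normal
connection. -/
theorem recurrent_normal_curvature_flat
    (C : VCalc M V) (g : V → V → (M → ℝ)) (phi : V → V) (xi : V) (eta : V → (M → ℝ))
    (f : M → ℝ) (nabla : V → V → V) (ws : V) (pr : V → V)
    (theta : V → V → (M → ℝ)) (m : ℕ) (e : Fin m → V)
    (hcs : IsConformalSasakian C g phi xi eta f)
    (hlc : IsLeviCivita C g nabla)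
    (hws : IsGradient C g f ws)
    (hpr : IsTangentProj C g pr)
    (hanti : ∀ X, pr X = X → pr (phi X) = 0)
    (hxinormal : pr xi = 0)
    (hm : 0 < m)
    (het : ∀ i, pr (e i) = e i)
    (hee : ∀ i j, g (e i) (e j) = if i = j then (1 : M → ℝ) else 0)
    (hspan : ∀ X, pr X = X → X = ∑ i : Fin m, g X (e i) • e i)
    (hrec : ∀ X Y N, pr X = X → pr Y = Y → pr N = 0 →
      normCurv C pr nabla X Y N = theta X Y • N) :
    (∀ X Y, pr X = X → pr Y = Y → theta X Y = 0) ∧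
    (∀ X Y N, pr X = X → pr Y = Y → pr N = 0 →
      normCurv C pr nabla X Y N = 0) := by
  obtain ⟨hacm, _⟩ := hcs
  have hg := hlc.metric
  have gzl : ∀ Y : V, g 0 Y = 0 := by
    intro Y
    have h := hg.smul_left 0 0 Y
    simpa using h
  have gzr : ∀ X : V, g X 0 = 0 := fun X => by rw [hg.symm]; exact gzl X
  have gnl : ∀ X Y : V, g (-X) Y = - g X Y := by
    intro X Y
    have h := hg.smul_left (-1) X Y
    simpa using h
  have gsl : ∀ X Y Z : V, g (X - Y) Z = g X Z - g Y Z := by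
    intro X Y Z
    rw [sub_eq_add_neg, hg.add_left, gnl, ← sub_eq_add_neg]
  have gar : ∀ X Y Z : V, g X (Y + Z) = g X Y + g X Z := by
    intro X Y Z; rw [hg.symm, hg.add_left, hg.symm Y X, hg.symm Z X]
  have prsub : ∀ X Y : V, pr (X - Y) = pr X - pr Y := by
    intro X Y
    have hneg : pr (-Y) = - pr Y := by
      have h := hpr.smul (-1) Y
      simpa using h
    rw [sub_eq_add_neg, hpr.add, hneg, ← sub_eq_add_neg]
  have prNC : ∀ X N, pr (normConn pr nabla X N) = 0 := by
    intro X N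
    unfold normConn
    rw [prsub, hpr.idem, sub_self]
  have gNCn : ∀ X N N', pr N' = 0 →
      g (normConn pr nabla X N) N' = g (nabla X N) N' := by
    intro X N N' h
    unfold normConn
    rw [gsl, hpr.selfadj, h, gzr, sub_zero]
  have gxixi : g xi xi = 1 := by
    have h := hacm.compat xi xi
    rw [hacm.phi_xi, gzl, hacm.eta_xi] at h
    linear_combination -h
  have hact1 : ∀ X, C.act X (g xi xi) = 0 := by
    intro X
    rw [gxixi]
    exact C.act_const X 1
  have gNxi : ∀ X, g (normConn pr nabla X xi) xi = 0 := by
    intro X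
    rw [gNCn X xi xi hxinormal]
    have h := hlc.compat X xi xi
    rw [hact1, hg.symm xi (nabla X xi)] at h
    funext p
    have hp := congrFun h p
    simp only [Pi.add_apply, Pi.zero_apply] at hp ⊢
    linarith
  have hgcross : ∀ A B : V, g (normConn pr nabla A (normConn pr nabla B xi)) xi
      = - g (normConn pr nabla B xi) (normConn pr nabla A xi) := by
    intro A B
    rw [gNCn _ _ _ hxinormal]
    have h := hlc.compat A (normConn pr nabla B xi) xi
    rw [gNxi B] at h
    have h0 : C.act A (0 : M → ℝ) = 0 := C.act_const A 0
    rw [h0] at h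
    have hdec : nabla A xi = normConn pr nabla A xi + pr (nabla A xi) := by
      unfold normConn; abel
    rw [hdec, gar] at h
    have h3 : g (normConn pr nabla B xi) (pr (nabla A xi)) = 0 := by
      rw [← hpr.selfadj, prNC, gzl]
    rw [h3] at h
    funext p
    have hp := congrFun h p
    simp only [Pi.add_apply, Pi.zero_apply, Pi.neg_apply] at hp ⊢
    linarith
  have key : ∀ X Y, pr X = X → pr Y = Y → theta X Y = 0 := by
    intro X Y hX hY
    have hC := hrec X Y xi hX hY hxinormal
    have hglhs : g (normCurv C pr nabla X Y xi) xi = 0 := by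
      unfold normCurv
      rw [gsl, gsl, hgcross X Y, hgcross Y X, gNxi (C.bracket X Y),
        hg.symm (normConn pr nabla Y xi) (normConn pr nabla X xi)]
      ring
    have hgr : g (theta X Y • xi) xi = theta X Y := by
      rw [hg.smul_left, gxixi, mul_one]
    rw [← hgr, ← hC]
    exact hglhs
  refine ⟨key, ?_⟩
  intro X Y N hX hY hN
  rw [hrec X Y N hX hY hN, key X Y hX hY, zero_smul]
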